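/- Every two-sided hyperideal A of an intra-regular LA-semihypergroup H with left identity is idempotent: A ∘ A = A. -/

import Mathlib

/-!
With the left identity `e`, intra-regularity and the LA laws give, for every `a`,
`a ∈ (x ∘ (a ∘ a)) ∘ y ⊆ ((e ∘ x) ∘ (a ∘ a)) ∘ y = ((e ∘ a) ∘ (x ∘ a)) ∘ y = (y ∘ (x ∘ a)) ∘ (e ∘ a)`
(medial law, then left invertive law). If `a ∈ A` and `H ∘ A ⊆ A`, both factors
`y ∘ (x ∘ a)` and `e ∘ a` lie in `A`, so `A ⊆ A ∘ A`; the reverse inclusion is `A ∘ A ⊆ H ∘ A ⊆ A`.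
-/

open Set

/-- Elementwise extension of a hyperoperation to subsets:
`hmul op A B = ⋃_{a∈A, b∈B} op a b`. -/
def hmul {H : Type*} (op : H → H → Set H) (A B : Set H) : Set H :=
  ⋃ a ∈ A, ⋃ b ∈ B, op a b

section LASemihypergroup

variable {H : Type*} {op : H → H → Set H}

theorem mem_hmul {A B : Set H} {z : H} :
    z ∈ hmul op A B ↔ ∃ a ∈ A, ∃ b ∈ B, z ∈ op a b := by
  simp [hmul]

theorem hmul_mono {A A' B B' : Set H} (hA : A ⊆ A') (hB : B ⊆ B') :
    hmul op A B ⊆ hmul op A' B' :=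
  biUnion_mono hA fun _ _ => biUnion_mono hB fun _ _ => Subset.rfl

theorem hmul_singleton_singleton (a b : H) : hmul op {a} {b} = op a b := by
  simp [hmul]

theorem hmul_subset_of_univ_hmul_subset {A : Set H} (hA : hmul op univ A ⊆ A) (B : Set H) :
    hmul op B A ⊆ A :=
  (hmul_mono (subset_univ B) Subset.rfl).trans hA

variable (hLA : ∀ x y z : H, hmul op (op x y) {z} = hmul op (op z y) {x})
include hLA

theorem hmul_left_invertive_subset (A B C : Set H) :
    hmul op (hmul op A B) C ⊆ hmul op (hmul op C B) A := by
  simp only [subset_def, mem_hmul]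
  rintro z ⟨t, ⟨a, ha, b, hb, ht⟩, c, hc, hz⟩
  have hz' : z ∈ hmul op (op c b) {a} := by
    rw [← hLA]
    exact mem_hmul.2 ⟨t, ht, c, rfl, hz⟩
  obtain ⟨s, hs, a', ha', hzs⟩ := mem_hmul.1 hz'
  rw [mem_singleton_iff] at ha'
  exact ⟨s, ⟨c, hc, b, hb, hs⟩, a, ha, ha' ▸ hzs⟩

theorem hmul_left_invertive (A B C : Set H) :
    hmul op (hmul op A B) C = hmul op (hmul op C B) A :=
  (hmul_left_invertive_subset hLA A B C).antisymm (hmul_left_invertive_subset hLA C B A)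

theorem hmul_medial (A B C D : Set H) :
    hmul op (hmul op A B) (hmul op C D) = hmul op (hmul op A C) (hmul op B D) := by
  rw [hmul_left_invertive hLA A B, hmul_left_invertive hLA C D B,
    hmul_left_invertive hLA (hmul op B D) C A]

theorem mem_hmul_of_mem_intraRegular {e : H} (he : ∀ a : H, a ∈ op e a) {a x y : H}
    (h : a ∈ hmul op (hmul op {x} (op a a)) {y}) :
    a ∈ hmul op (hmul op {y} (op x a)) (op e a) := by
  have hx : ({x} : Set H) ⊆ hmul op {e} {x} := by
    rw [singleton_subset_iff, hmul_singleton_singleton]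
    exact he x
  have h' := hmul_mono (hmul_mono hx Subset.rfl) Subset.rfl h
  rwa [← hmul_singleton_singleton (op := op) a a, hmul_medial hLA, hmul_left_invertive hLA,
    hmul_singleton_singleton e a, hmul_singleton_singleton x a] at h'

theorem subset_hmul_self_of_intraRegular {e : H} (he : ∀ a : H, a ∈ op e a)
    (hir : ∀ a : H, ∃ x y : H, a ∈ hmul op (hmul op {x} (op a a)) {y})
    {A : Set H} (hA : hmul op univ A ⊆ A) : A ⊆ hmul op A A := by
  intro a ha
  obtain ⟨x, y, hxy⟩ := hir a
  have hopA : ∀ u : H, op u a ⊆ A := fun u => by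
    rw [← hmul_singleton_singleton (op := op)]
    exact (hmul_mono Subset.rfl (singleton_subset_iff.2 ha)).trans
      (hmul_subset_of_univ_hmul_subset hA _)
  have hyxa : hmul op {y} (op x a) ⊆ A :=
    (hmul_mono Subset.rfl (hopA x)).trans (hmul_subset_of_univ_hmul_subset hA _)
  exact hmul_mono hyxa (hopA e) (mem_hmul_of_mem_intraRegular hLA he hxy)

end LASemihypergroup

theorem stmt15_general {H : Type*} (op : H → H → Set H)
    (hLA : ∀ x y z : H, hmul op (op x y) {z} = hmul op (op z y) {x})
    (e : H) (he : ∀ a : H, a ∈ op e a)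
    (hir : ∀ a : H, ∃ x y : H, a ∈ hmul op (hmul op {x} (op a a)) {y})
    (A : Set H)
    (hAl : hmul op Set.univ A ⊆ A) :
    hmul op A A = A :=
  (hmul_subset_of_univ_hmul_subset hAl A).antisymm
    (subset_hmul_self_of_intraRegular hLA he hir hAl)

theorem stmt15 {H : Type*} (op : H → H → Set H)
    (hne : ∀ a b : H, (op a b).Nonempty)
    (hLA : ∀ x y z : H, hmul op (op x y) {z} = hmul op (op z y) {x})
    (e : H) (he : ∀ a : H, a ∈ op e a)
    (hir : ∀ a : H, ∃ x y : H, a ∈ hmul op (hmul op {x} (op a a)) {y})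
    (A : Set H) (hAne : A.Nonempty)
    (hAl : hmul op Set.univ A ⊆ A) (hAr : hmul op A Set.univ ⊆ A) :
    hmul op A A = A :=
  stmt15_general op hLA e he hir A hAl
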